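/- arXiv:1510.08094 — 4 statements merged into one kernel-verified Lean document; each statement's English description precedes it below -/
import Mathlib

section
/- If f̃ is a BMC function satisfying f̃(λ−π,θ) = f̃(λ,−θ), and a GE update is applied: f̃ ← f̃ − [f̃(λ*−π,θ), f̃(λ*,θ)] · N · [f̃(λ,θ*); f̃(λ,−θ*)], where N is any 2×2 centrosymmetric matrix, then the residual is again a BMC function. -/
/-!
Write the GE update as `e = f - r ⬝ᵥ N *ᵥ c` with row vector `r θ = [f(λ*-π,θ), f(λ*,θ)]` and
column vector `c λ = [f(λ,θ*), f(λ,-θ*)]`. The BMC symmetry of `f` turns `r (-θ)` into the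
reversal of `r θ` and `c (λ-π)` into the reversal of `c λ`, and a centrosymmetric `N` satisfies
`J N J = N` for the reversal `J`, so the correction term has the BMC symmetry as well.
-/

open Real Matrix

def IsBMC {α : Type*} (f : ℝ → ℝ → α) : Prop :=
  ∀ lam θ : ℝ, f (lam - π) θ = f lam (-θ)

theorem IsBMC.apply_sub_pi_neg {α : Type*} {f : ℝ → ℝ → α} (hf : IsBMC f) (lam θ : ℝ) :
    f (lam - π) (-θ) = f lam θ := by
  simpa using hf lam (-θ)

def Matrix.IsCentrosymm {R : Type*} {n : ℕ} (N : Matrix (Fin n) (Fin n) R) : Prop :=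
  ∀ i j, N i.rev j.rev = N i j

theorem Matrix.isCentrosymm_fin_two {R : Type*} (p q : R) : !![p, q; q, p].IsCentrosymm := by
  intro i j
  fin_cases i <;> fin_cases j <;> rfl

theorem Matrix.IsCentrosymm.comp_rev_dotProduct_mulVec_comp_rev {R : Type*} [CommSemiring R]
    {n : ℕ} {N : Matrix (Fin n) (Fin n) R} (hN : N.IsCentrosymm) (u v : Fin n → R) :
    u ∘ Fin.rev ⬝ᵥ N *ᵥ (v ∘ Fin.rev) = u ⬝ᵥ N *ᵥ v := by
  have hsub : N.submatrix Fin.revPerm Fin.revPerm = N := Matrix.ext hN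
  calc u ∘ Fin.rev ⬝ᵥ N *ᵥ (v ∘ Fin.rev)
      = u ∘ Fin.revPerm ⬝ᵥ (N.submatrix Fin.revPerm Fin.revPerm *ᵥ (v ∘ Fin.revPerm)) := by
        rw [hsub]; rfl
    _ = u ⬝ᵥ N *ᵥ v := by
        rw [submatrix_mulVec_equiv, Function.comp_assoc, Equiv.self_comp_symm,
          Function.comp_id, comp_equiv_dotProduct_comp_equiv]

theorem vecTwo_comp_rev {α : Type*} (a b : α) : ![a, b] ∘ Fin.rev = ![b, a] := by
  ext i
  fin_cases i <;> rfl

noncomputable def geUpdate {R : Type*} [CommRing R] (f : ℝ → ℝ → R)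
    (N : Matrix (Fin 2) (Fin 2) R) (lam₀ θ₀ lam θ : ℝ) : R :=
  f lam θ - ![f (lam₀ - π) θ, f lam₀ θ] ⬝ᵥ N *ᵥ ![f lam θ₀, f lam (-θ₀)]

theorem IsBMC.geUpdate {R : Type*} [CommRing R] {f : ℝ → ℝ → R} (hf : IsBMC f)
    {N : Matrix (Fin 2) (Fin 2) R} (hN : N.IsCentrosymm) (lam₀ θ₀ : ℝ) :
    IsBMC (geUpdate f N lam₀ θ₀) := by
  intro lam θ
  have hrow : ![f (lam₀ - π) (-θ), f lam₀ (-θ)] = ![f (lam₀ - π) θ, f lam₀ θ] ∘ Fin.rev := by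
    rw [vecTwo_comp_rev, hf.apply_sub_pi_neg, hf]
  have hcol : ![f (lam - π) θ₀, f (lam - π) (-θ₀)] = ![f lam θ₀, f lam (-θ₀)] ∘ Fin.rev := by
    rw [vecTwo_comp_rev, hf.apply_sub_pi_neg, hf]
  rw [_root_.geUpdate, _root_.geUpdate, hf, hcol, hrow, ← hN.comp_rev_dotProduct_mulVec_comp_rev,
    Function.comp_assoc, Fin.rev_involutive.comp_self, Function.comp_id]

/-- A GE update with a 2×2 centrosymmetric pivot matrix `N = ![![p,q],![q,p]]`
preserves the BMC symmetry `f̃(λ−π,θ) = f̃(λ,−θ)`: the residual is again BMC. -/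
theorem ge_update_preserves_bmc (f : ℝ → ℝ → ℂ) (p q : ℂ) (lam₀ θ₀ : ℝ)
    (hBMC : ∀ lam θ : ℝ, f (lam - π) θ = f lam (-θ)) :
    let e : ℝ → ℝ → ℂ := fun lam θ =>
      f lam θ -
        (f (lam₀ - π) θ * (p * f lam θ₀ + q * f lam (-θ₀)) +
          f lam₀ θ * (q * f lam θ₀ + p * f lam (-θ₀)))
    ∀ lam θ : ℝ, e (lam - π) θ = e lam (-θ) := by
  intro e
  have he : e = geUpdate f !![p, q; q, p] lam₀ θ₀ := by
    funext lam θ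
    simp [e, geUpdate, dotProduct, mulVec, Fin.sum_univ_two]
  rw [he]
  exact IsBMC.geUpdate hBMC (isCentrosymm_fin_two p q) lam₀ θ₀
end

section
/- Let f̃ be a bounded BMC function with ‖f̃‖_∞ its sup norm, and let M be a 2×2 pivot matrix as in the structure-preserving GE step with σ₁(M) ≥ ‖f̃‖_∞. If σ₂(M) < α·σ₁(M) and the rank-1 ε-pseudoinverse M^{†ε} (with ε = α σ₁(M)) is used in the GE update, then the sup norm of the residual is at most 3‖f̃‖_∞. -/
open Real

/-! Each rank-one update term has the form `x * y / (2 * d)`, where `x` and `y` are sums or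
differences of two values of `f̃`, so `‖x‖, ‖y‖ ≤ 2‖f̃‖_∞`, and `d` is the eigenvalue `a ± b`
of `M` of largest modulus, i.e. `σ₁(M) = ‖d‖ ≥ ‖f̃‖_∞`. Hence the update is at most
`(2‖f̃‖_∞)² / (2σ₁(M)) ≤ 2‖f̃‖_∞`, and the residual at most `3‖f̃‖_∞`. -/

theorem norm_mul_div_le_of_le {𝕜 : Type*} [NormedDivisionRing 𝕜] {x y d : 𝕜} {K : ℝ}
    (hx : ‖x‖ ≤ K) (hy : ‖y‖ ≤ K) (hd : K ≤ ‖d‖) : ‖x * y / d‖ ≤ K := by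
  have hK : 0 ≤ K := (norm_nonneg x).trans hx
  rcases eq_or_ne d 0 with rfl | hd₀
  · simpa using hK
  rw [norm_div, norm_mul, div_le_iff₀ (norm_pos_iff.2 hd₀)]
  calc ‖x‖ * ‖y‖ ≤ K * K := mul_le_mul hx hy (norm_nonneg y) hK
    _ ≤ K * ‖d‖ := mul_le_mul_of_nonneg_left hd hK

theorem ge_growth_bound_rank_one_general (f : ℝ → ℝ → ℂ) (C : ℝ) (lam₀ θ₀ : ℝ)
    (hbd : ∀ lam θ : ℝ, ‖f lam θ‖ ≤ C)
    (a b : ℂ)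
    (hσ₁ : C ≤ max ‖a + b‖ ‖a - b‖) :
    ∀ lam θ : ℝ,
      ‖f lam θ -
          (if ‖a - b‖ ≤ ‖a + b‖ then
            (f (lam₀ - π) θ + f lam₀ θ) * (f lam θ₀ + f lam (-θ₀)) / (2 * (a + b))
          else
            (f (lam₀ - π) θ - f lam₀ θ) * (f lam θ₀ - f lam (-θ₀)) / (2 * (a - b)))‖ ≤
        3 * C := by
  intro lam θ
  refine (norm_sub_le _ _).trans ?_
  have hf := hbd lam θ
  have hpivot (d : ℂ) (hd : C ≤ ‖d‖) : C + C ≤ ‖2 * d‖ := by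
    rw [norm_mul, Complex.norm_two]
    linarith
  split_ifs with h
  · have hupdate := norm_mul_div_le_of_le
      (norm_add_le_of_le (hbd (lam₀ - π) θ) (hbd lam₀ θ))
      (norm_add_le_of_le (hbd lam θ₀) (hbd lam (-θ₀)))
      (hpivot _ (hσ₁.trans (max_le le_rfl h)))
    linarith
  · have hupdate := norm_mul_div_le_of_le
      (norm_sub_le_of_le (hbd (lam₀ - π) θ) (hbd lam₀ θ))
      (norm_sub_le_of_le (hbd lam θ₀) (hbd lam (-θ₀)))
      (hpivot _ (hσ₁.trans (max_le (not_le.mp h).le le_rfl)))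
    linarith

/-- Growth bound, rank-1 case: if the pivot matrix `M = ![![a,b],![b,a]]` (with
`a = f̃(λ*−π,θ*)`, `b = f̃(λ*,θ*)`) satisfies `σ₁(M) ≥ ‖f̃‖_∞` and
`σ₂(M) < α·σ₁(M)`, and the rank-1 ε-pseudoinverse (ε = α σ₁(M)) is used in the
GE update, then the residual has sup norm at most `3‖f̃‖_∞`. -/
theorem ge_growth_bound_rank_one (f : ℝ → ℝ → ℂ) (C α : ℝ) (lam₀ θ₀ : ℝ)
    (hbd : ∀ lam θ : ℝ, ‖f lam θ‖ ≤ C)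
    (hBMC : ∀ lam θ : ℝ, f (lam - π) θ = f lam (-θ))
    (a b : ℂ) (ha : a = f (lam₀ - π) θ₀) (hb : b = f lam₀ θ₀)
    (hα₀ : 0 < α) (hα₁ : α ≤ 1)
    (hσ₁ : C ≤ max ‖a + b‖ ‖a - b‖)
    (hσ₂ : min ‖a + b‖ ‖a - b‖ < α * max ‖a + b‖ ‖a - b‖) :
    ∀ lam θ : ℝ,
      ‖f lam θ -
          (if ‖a - b‖ ≤ ‖a + b‖ then
            (f (lam₀ - π) θ + f lam₀ θ) * (f lam θ₀ + f lam (-θ₀)) / (2 * (a + b))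
          else
            (f (lam₀ - π) θ - f lam₀ θ) * (f lam θ₀ - f lam (-θ₀)) / (2 * (a - b)))‖ ≤
        3 * C :=
  ge_growth_bound_rank_one_general f C lam₀ θ₀ hbd a b hσ₁
end

section
/- Let f̃ be a bounded BMC function and M a 2×2 pivot matrix in the structure-preserving GE step with σ₁(M) ≥ ‖f̃‖_∞ and σ₂(M) ≥ α·σ₁(M) for some α ∈ (0,1]. Then every entry of M⁻¹ is bounded in absolute value by 1/(α‖f̃‖_∞), and consequently the residual of the GE update has sup norm at most (1 + 4/α)·‖f̃‖_∞. -/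
open Real

/-! The inverse of `M = !![a, b; b, a]` is `((a + b) * (a - b))⁻¹ • !![a, -b; -b, a]`. Its singular
values are `‖a + b‖` and `‖a - b‖`, and `‖a‖, ‖b‖ ≤ σ₁(M)`, so every entry of `M⁻¹` is at most
`σ₁ / (σ₁ σ₂) = 1 / σ₂ ≤ 1 / (α ‖f̃‖_∞)`. The residual is then bounded by the triangle inequality:
`‖f̃‖_∞ + 2 · ‖f̃‖_∞ · 2 · ‖f̃‖_∞ / (α ‖f̃‖_∞)`.

For singular `M` the entry bound reads `0 ≤ 0`: then `min ‖a + b‖ ‖a - b‖ = 0`, and both `M⁻¹`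
and `1 / 0` are `0` in Mathlib. -/

theorem norm_le_max_norm_add_norm_sub {E : Type*} [SeminormedAddCommGroup E] [NormedSpace ℝ E]
    (a b : E) : ‖a‖ ≤ max ‖a + b‖ ‖a - b‖ := by
  have h : (2 : ℝ) • a = (a + b) + (a - b) := by rw [two_smul]; abel
  have := norm_add_le (a + b) (a - b)
  rw [← h, norm_smul, Real.norm_two] at this
  linarith [le_max_left ‖a + b‖ ‖a - b‖, le_max_right ‖a + b‖ ‖a - b‖]

theorem Matrix.norm_inv_circulant_two_apply_le {𝕜 : Type*} [RCLike 𝕜] (a b : 𝕜) (i j : Fin 2) :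
    ‖(!![a, b; b, a] : Matrix (Fin 2) (Fin 2) 𝕜)⁻¹ i j‖ ≤ 1 / min ‖a + b‖ ‖a - b‖ := by
  set s := max ‖a + b‖ ‖a - b‖
  set m := min ‖a + b‖ ‖a - b‖
  have hinv : (!![a, b; b, a] : Matrix (Fin 2) (Fin 2) 𝕜)⁻¹
      = ((a + b) * (a - b))⁻¹ • !![a, -b; -b, a] := by
    rw [Matrix.inv_def, Matrix.adjugate_fin_two_of, Matrix.det_fin_two_of, Ring.inverse_eq_inv']
    ring_nf
  have hentry : ∀ x : 𝕜, ‖x‖ ≤ s → ‖((a + b) * (a - b))⁻¹ * x‖ ≤ 1 / m := by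
    intro x hx
    rw [norm_mul, norm_inv, norm_mul, ← min_mul_max ‖a + b‖, inv_mul_eq_div]
    rcases eq_or_ne s 0 with hs | hs
    · have hm : 0 ≤ m := le_min (norm_nonneg _) (norm_nonneg _)
      simp [show ‖x‖ = 0 by linarith [norm_nonneg x], hm]
    · calc ‖x‖ / (m * s) ≤ s / (m * s) := by gcongr
        _ = 1 / m := by rw [div_mul_cancel_right₀ hs, one_div]
  have ha : ‖a‖ ≤ s := norm_le_max_norm_add_norm_sub a b
  have hb : ‖b‖ ≤ s := by
    simpa [s, add_comm, norm_sub_rev, max_comm] using norm_le_max_norm_add_norm_sub b a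
  fin_cases i <;> fin_cases j
  all_goals
    simp only [hinv, Matrix.smul_apply, smul_eq_mul]
    exact hentry _ (by simpa)

theorem norm_sub_rank_two_update_le {R : Type*} [SeminormedRing R] (N : Matrix (Fin 2) (Fin 2) R)
    {x p q u v : R} {C K : ℝ} (hN : ∀ i j, ‖N i j‖ ≤ K) (hx : ‖x‖ ≤ C) (hp : ‖p‖ ≤ C)
    (hq : ‖q‖ ≤ C) (hu : ‖u‖ ≤ C) (hv : ‖v‖ ≤ C) :
    ‖x - (p * (N 0 0 * u + N 0 1 * v) + q * (N 1 0 * u + N 1 1 * v))‖ ≤ C + 4 * K * C ^ 2 := by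
  have hC : 0 ≤ C := (norm_nonneg x).trans hx
  have hK : 0 ≤ K := (norm_nonneg _).trans (hN 0 0)
  have hrow : ∀ i, ‖N i 0 * u + N i 1 * v‖ ≤ 2 * K * C := fun i =>
    calc ‖N i 0 * u + N i 1 * v‖ ≤ ‖N i 0‖ * ‖u‖ + ‖N i 1‖ * ‖v‖ :=
          (norm_add_le _ _).trans (add_le_add (norm_mul_le _ _) (norm_mul_le _ _))
      _ ≤ K * C + K * C := by gcongr <;> apply hN
      _ = 2 * K * C := by ring
  calc _ ≤ ‖x‖ + (‖p‖ * ‖N 0 0 * u + N 0 1 * v‖ + ‖q‖ * ‖N 1 0 * u + N 1 1 * v‖) :=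
        (norm_sub_le _ _).trans (add_le_add_right
          ((norm_add_le _ _).trans (add_le_add (norm_mul_le _ _) (norm_mul_le _ _))) _)
    _ ≤ C + (C * (2 * K * C) + C * (2 * K * C)) := by gcongr <;> apply hrow
    _ = C + 4 * K * C ^ 2 := by ring

theorem ge_growth_bound_rank_two_general (f : ℝ → ℝ → ℂ) (C α : ℝ) (lam₀ θ₀ : ℝ)
    (hbd : ∀ lam θ : ℝ, ‖f lam θ‖ ≤ C)
    (a b : ℂ) (ha : a = f (lam₀ - π) θ₀) (hb : b = f lam₀ θ₀)
    (hα₀ : 0 < α)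
    (hσ₁ : C ≤ max ‖a + b‖ ‖a - b‖)
    (hσ₂ : α * max ‖a + b‖ ‖a - b‖ ≤ min ‖a + b‖ ‖a - b‖) :
    let M : Matrix (Fin 2) (Fin 2) ℂ := !![a, b; b, a]
    (∀ i j : Fin 2, ‖M⁻¹ i j‖ ≤ 1 / (α * C)) ∧
      ∀ lam θ : ℝ,
        ‖f lam θ -
            (f (lam₀ - π) θ * (M⁻¹ 0 0 * f lam θ₀ + M⁻¹ 0 1 * f lam (-θ₀)) +
              f lam₀ θ * (M⁻¹ 1 0 * f lam θ₀ + M⁻¹ 1 1 * f lam (-θ₀)))‖ ≤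
          (1 + 4 / α) * C := by
  intro M
  rcases ((norm_nonneg _).trans (hbd 0 0)).eq_or_lt with rfl | hC
  · have hf : ∀ lam θ, f lam θ = 0 := fun lam θ => norm_le_zero_iff.mp (hbd lam θ)
    have hM0 : M = 0 := by
      ext i j; fin_cases i <;> fin_cases j <;> simp [M, ha, hb, hf]
    simp [hM0, hf]
  have hσ₂C : α * C ≤ min ‖a + b‖ ‖a - b‖ := (mul_le_mul_of_nonneg_left hσ₁ hα₀.le).trans hσ₂
  have hM : ∀ i j, ‖M⁻¹ i j‖ ≤ 1 / (α * C) := fun i j =>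
    (Matrix.norm_inv_circulant_two_apply_le a b i j).trans
      (one_div_le_one_div_of_le (by positivity) hσ₂C)
  refine ⟨hM, fun lam θ => ?_⟩
  calc _ ≤ C + 4 * (1 / (α * C)) * C ^ 2 := norm_sub_rank_two_update_le _ hM (hbd _ _) (hbd _ _)
        (hbd _ _) (hbd _ _) (hbd _ _)
    _ = (1 + 4 / α) * C := by field_simp

/-- Growth bound, rank-2 case: if the pivot matrix `M = ![![a,b],![b,a]]` satisfies
`σ₁(M) ≥ ‖f̃‖_∞` and `σ₂(M) ≥ α·σ₁(M)` with `α ∈ (0,1]`, then every entry of `M⁻¹`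
is bounded by `1/(α‖f̃‖_∞)` in absolute value, and the GE residual has sup norm at
most `(1 + 4/α)·‖f̃‖_∞`. -/
theorem ge_growth_bound_rank_two (f : ℝ → ℝ → ℂ) (C α : ℝ) (lam₀ θ₀ : ℝ)
    (hbd : ∀ lam θ : ℝ, ‖f lam θ‖ ≤ C)
    (hBMC : ∀ lam θ : ℝ, f (lam - π) θ = f lam (-θ))
    (a b : ℂ) (ha : a = f (lam₀ - π) θ₀) (hb : b = f lam₀ θ₀)
    (hα₀ : 0 < α) (hα₁ : α ≤ 1)
    (hσ₁ : C ≤ max ‖a + b‖ ‖a - b‖)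
    (hσ₂ : α * max ‖a + b‖ ‖a - b‖ ≤ min ‖a + b‖ ‖a - b‖)
    (hunit : IsUnit (!![a, b; b, a] : Matrix (Fin 2) (Fin 2) ℂ).det) :
    let M : Matrix (Fin 2) (Fin 2) ℂ := !![a, b; b, a]
    (∀ i j : Fin 2, ‖M⁻¹ i j‖ ≤ 1 / (α * C)) ∧
      ∀ lam θ : ℝ,
        ‖f lam θ -
            (f (lam₀ - π) θ * (M⁻¹ 0 0 * f lam θ₀ + M⁻¹ 0 1 * f lam (-θ₀)) +
              f lam₀ θ * (M⁻¹ 1 0 * f lam θ₀ + M⁻¹ 1 1 * f lam (-θ₀)))‖ ≤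
          (1 + 4 / α) * C :=
  ge_growth_bound_rank_two_general f C α lam₀ θ₀ hbd a b ha hb hα₀ hσ₁ hσ₂
end

section
/- If u : ℝ² → ℂ is a 2π-bi-periodic BMC solution of the doubled Poisson equation sin²θ·u_θθ + cos θ sin θ·u_θ + u_λλ = sin²θ·f̃ on [−π,π]², and u is represented as a finite 2D Fourier series u(λ,θ) = Σ_j Σ_k X_{jk} e^{ijθ}e^{ikλ}, then the coefficient matrix X satisfies the Sylvester equation (M_sin² D_m² + M_cos M_sin D_m) X + X D_n² = F, where D_m = diag(ij), D_n = diag(ik), M_cos and M_sin are the tridiagonal multiplication matrices for cos θ and sin θ, and F is the coefficient matrix of sin²θ·f̃. -/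
/-!
Differentiating in `θ` or `λ` multiplies the coefficient `X j k` by `i j` or `i k`, and
multiplying by `sin θ = (i/2)(e^{-iθ} - e^{iθ})` or `cos θ = (e^{-iθ} + e^{iθ})/2` shifts the
`θ`-index by `±1`. Hence the doubled Poisson operator maps the trigonometric polynomial with
coefficients `X` to the one with coefficients `sylvesterOp X`, on an index window widened by two
in `j`. Orthogonality of the `e^{ijt}` on `[0, 2π]` lets one compare coefficients with those of
`sin²θ · f̃` inside the window; outside it both sides vanish.
-/

open Real

/-- Coefficient operator for `∂/∂θ` (the matrix `D_m` acting on rows). -/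
noncomputable def Dth (X : ℤ → ℤ → ℂ) : ℤ → ℤ → ℂ := fun j k => Complex.I * j * X j k

/-- Coefficient operator for multiplication by `sin θ` (the matrix `M_sin`). -/
noncomputable def MsinOp (X : ℤ → ℤ → ℂ) : ℤ → ℤ → ℂ := fun j k =>
  Complex.I / 2 * X (j + 1) k - Complex.I / 2 * X (j - 1) k

/-- Coefficient operator for multiplication by `cos θ` (the matrix `M_cos`). -/
noncomputable def McosOp (X : ℤ → ℤ → ℂ) : ℤ → ℤ → ℂ := fun j k =>
  (X (j + 1) k + X (j - 1) k) / 2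

open Complex Finset

noncomputable section

def trigSum (s : Finset ℤ) (c : ℤ → ℂ) (t : ℝ) : ℂ :=
  ∑ j ∈ s, c j * exp (I * j * t)

def trigSum₂ (J K : Finset ℤ) (X : ℤ → ℤ → ℂ) (lam θ : ℝ) : ℂ :=
  ∑ j ∈ J, ∑ k ∈ K, X j k * exp (I * j * θ) * exp (I * k * lam)

/-- `(M_sin² D_m² + M_cos M_sin D_m) X + X D_n²` in the matrix notation of the paper. -/
def sylvesterOp (X : ℤ → ℤ → ℂ) : ℤ → ℤ → ℂ :=
  MsinOp (MsinOp (Dth (Dth X))) + McosOp (MsinOp (Dth X)) + fun j k => (I * k) ^ 2 * X j k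

def doubledPoissonOp (u : ℝ → ℝ → ℂ) (lam θ : ℝ) : ℂ :=
  (Real.sin θ : ℂ) ^ 2 * deriv (fun t => deriv (fun t' => u lam t') t) θ +
    (Real.cos θ : ℂ) * (Real.sin θ : ℂ) * deriv (fun t => u lam t) θ +
    deriv (fun l => deriv (fun l' => u l' θ) l) lam

end

section trigSum

variable {s : Finset ℤ} {c : ℤ → ℂ}

theorem mul_trigSum (a : ℂ) (s : Finset ℤ) (c : ℤ → ℂ) (t : ℝ) :
    a * trigSum s c t = trigSum s (fun j => a * c j) t := by
  simp only [trigSum, mul_sum, mul_assoc]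

theorem trigSum_sub (s : Finset ℤ) (c d : ℤ → ℂ) (t : ℝ) :
    trigSum s c t - trigSum s d t = trigSum s (fun j => c j - d j) t := by
  simp only [trigSum, sub_mul, sum_sub_distrib]

theorem trigSum_add (s : Finset ℤ) (c d : ℤ → ℂ) (t : ℝ) :
    trigSum s c t + trigSum s d t = trigSum s (fun j => c j + d j) t := by
  simp only [trigSum, add_mul, sum_add_distrib]

theorem div_trigSum (s : Finset ℤ) (c : ℤ → ℂ) (a : ℂ) (t : ℝ) :
    trigSum s c t / a = trigSum s (fun j => c j / a) t := by
  simp only [trigSum, sum_div, div_mul_eq_mul_div]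

theorem hasDerivAt_trigSum (s : Finset ℤ) (c : ℤ → ℂ) (t : ℝ) :
    HasDerivAt (trigSum s c) (trigSum s (fun j => I * j * c j) t) t := by
  unfold trigSum
  refine HasDerivAt.fun_sum fun j _ => ?_
  have h := (((hasDerivAt_id t).ofReal_comp.const_mul (I * j)).cexp).const_mul (c j)
  exact h.congr_deriv (by simp only [id, Complex.ofReal_one]; ring)

theorem trigSum_shift (d : ℤ) (hc : ∀ j ∉ s, c j = 0) (hcd : ∀ j ∉ s, c (j + d) = 0) (t : ℝ) :
    trigSum s (fun j => c (j + d)) t = exp (-(I * d * t)) * trigSum s c t := by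
  simp only [trigSum, mul_sum]
  calc ∑ j ∈ s, c (j + d) * exp (I * j * t)
      = ∑ i ∈ s.map (addRightEmbedding d), c i * exp (I * (i - d) * t) := by simp
    _ = ∑ i ∈ s, c i * exp (I * (i - d) * t) := by
      refine sum_congr_of_eq_on_inter (fun i _ hi => by simp [hc i hi]) (fun i _ hi => ?_)
        fun i _ _ => rfl
      have := hcd (i - d) fun h => hi (mem_map.2 ⟨i - d, h, by simp⟩)
      simp_all
    _ = _ := sum_congr rfl fun i _ => by
      rw [mul_left_comm, ← Complex.exp_add]
      ring_nf

variable {a b : ℤ}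

theorem trigSum_add_one (hs : Icc (a - 1) (b + 1) ⊆ s) (hc : ∀ j ∉ Icc a b, c j = 0) (t : ℝ) :
    trigSum s (fun j => c (j + 1)) t = exp (-(I * t)) * trigSum s c t := by
  have h := trigSum_shift 1 (fun j hj => hc j fun h => hj (hs (by simp only [mem_Icc] at h ⊢; omega)))
    (fun j hj => hc (j + 1) fun h => hj (hs (by simp only [mem_Icc] at h ⊢; omega))) t
  simpa using h

theorem trigSum_sub_one (hs : Icc (a - 1) (b + 1) ⊆ s) (hc : ∀ j ∉ Icc a b, c j = 0) (t : ℝ) :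
    trigSum s (fun j => c (j - 1)) t = exp (I * t) * trigSum s c t := by
  have h := trigSum_shift (-1) (fun j hj => hc j fun h => hj (hs (by simp only [mem_Icc] at h ⊢; omega)))
    (fun j hj => hc (j + -1) fun h => hj (hs (by simp only [mem_Icc] at h ⊢; omega))) t
  simpa [← sub_eq_add_neg] using h

theorem sin_mul_trigSum (hs : Icc (a - 1) (b + 1) ⊆ s) (hc : ∀ j ∉ Icc a b, c j = 0) (t : ℝ) :
    (Real.sin t : ℂ) * trigSum s c t =
      trigSum s (fun j => I / 2 * c (j + 1) - I / 2 * c (j - 1)) t := by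
  rw [← trigSum_sub, ← mul_trigSum, ← mul_trigSum, trigSum_add_one hs hc, trigSum_sub_one hs hc,
    Complex.ofReal_sin, Complex.sin]
  ring_nf

theorem cos_mul_trigSum (hs : Icc (a - 1) (b + 1) ⊆ s) (hc : ∀ j ∉ Icc a b, c j = 0) (t : ℝ) :
    (Real.cos t : ℂ) * trigSum s c t = trigSum s (fun j => (c (j + 1) + c (j - 1)) / 2) t := by
  simp only [add_div]
  rw [← trigSum_add, ← div_trigSum, ← div_trigSum, trigSum_add_one hs hc, trigSum_sub_one hs hc,
    Complex.ofReal_cos, Complex.cos]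
  ring_nf

theorem integral_exp_int_mul (n : ℤ) :
    ∫ t in (0 : ℝ)..2 * π, exp (I * n * t) = if n = 0 then (2 * π : ℂ) else 0 := by
  split_ifs with hn
  · simp [hn]
  · rw [integral_exp_mul_complex (mul_ne_zero I_ne_zero (Int.cast_ne_zero.2 hn))]
    push_cast
    rw [show I * n * (2 * π) = n * (2 * π * I) by ring, exp_int_mul_two_pi_mul_I]
    simp

theorem integral_trigSum_mul_exp (s : Finset ℤ) (c : ℤ → ℂ) {j : ℤ} (hj : j ∈ s) :
    ∫ t in (0 : ℝ)..2 * π, trigSum s c t * exp (-(I * j * t)) = 2 * π * c j := by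
  have h : ∀ i (t : ℝ), c i * exp (I * i * t) * exp (-(I * j * t)) =
      c i * exp (I * (i - j : ℤ) * t) := fun i t => by
    rw [mul_assoc, ← Complex.exp_add]; push_cast; ring_nf
  simp only [trigSum, sum_mul, h]
  rw [intervalIntegral.integral_finsetSum fun i _ =>
    (Continuous.intervalIntegrable (by fun_prop) _ _)]
  simp only [intervalIntegral.integral_const_mul, integral_exp_int_mul, sub_eq_zero, mul_ite,
    mul_zero, sum_ite_eq', if_pos hj]
  ring

theorem eq_of_trigSum_eq {c d : ℤ → ℂ} (h : ∀ t, trigSum s c t = trigSum s d t) :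
    ∀ j ∈ s, c j = d j := fun j hj => by
  have hc := integral_trigSum_mul_exp s c hj
  rw [funext h, integral_trigSum_mul_exp s d hj] at hc
  exact (mul_left_cancel₀ (by simp [pi_ne_zero]) hc).symm

end trigSum

section trigSum₂

variable {J K : Finset ℤ} {X : ℤ → ℤ → ℂ} {a b : ℤ}

theorem trigSum₂_eq_trigSum (J K : Finset ℤ) (X : ℤ → ℤ → ℂ) (lam θ : ℝ) :
    trigSum₂ J K X lam θ = trigSum K (fun k => trigSum J (fun j => X j k) θ) lam := by
  simp only [trigSum₂, trigSum, sum_mul]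
  exact sum_comm

theorem trigSum₂_add (J K : Finset ℤ) (X Y : ℤ → ℤ → ℂ) (lam θ : ℝ) :
    trigSum₂ J K (X + Y) lam θ = trigSum₂ J K X lam θ + trigSum₂ J K Y lam θ := by
  simp only [trigSum₂, Pi.add_apply, add_mul, sum_add_distrib]

theorem trigSum₂_of_subset {J' : Finset ℤ} (hJ : J ⊆ J') (hX : ∀ j ∉ J, ∀ k, X j k = 0) :
    trigSum₂ J K X = trigSum₂ J' K X :=
  funext₂ fun _ _ => sum_subset hJ fun j _ hj => by simp [hX j hj]

theorem deriv_trigSum₂_theta (J K : Finset ℤ) (X : ℤ → ℤ → ℂ) (lam θ : ℝ) :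
    deriv (fun t => trigSum₂ J K X lam t) θ = trigSum₂ J K (Dth X) lam θ := by
  simp only [trigSum₂_eq_trigSum, trigSum]
  exact (HasDerivAt.fun_sum fun k _ => (hasDerivAt_trigSum J _ θ).mul_const _).deriv

theorem deriv_trigSum₂_lam (J K : Finset ℤ) (X : ℤ → ℤ → ℂ) (lam θ : ℝ) :
    deriv (fun l => trigSum₂ J K X l θ) lam =
      trigSum₂ J K (fun j k => I * k * X j k) lam θ := by
  simp only [trigSum₂_eq_trigSum, (hasDerivAt_trigSum K _ lam).deriv, mul_trigSum]

theorem sin_mul_trigSum₂ (hJ : Icc (a - 1) (b + 1) ⊆ J) (hX : ∀ j ∉ Icc a b, ∀ k, X j k = 0)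
    (lam θ : ℝ) :
    (Real.sin θ : ℂ) * trigSum₂ J K X lam θ = trigSum₂ J K (MsinOp X) lam θ := by
  rw [trigSum₂_eq_trigSum, trigSum₂_eq_trigSum, mul_trigSum]
  congr 1
  funext k
  exact sin_mul_trigSum hJ (fun j hj => hX j hj k) θ

theorem cos_mul_trigSum₂ (hJ : Icc (a - 1) (b + 1) ⊆ J) (hX : ∀ j ∉ Icc a b, ∀ k, X j k = 0)
    (lam θ : ℝ) :
    (Real.cos θ : ℂ) * trigSum₂ J K X lam θ = trigSum₂ J K (McosOp X) lam θ := by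
  rw [trigSum₂_eq_trigSum, trigSum₂_eq_trigSum, mul_trigSum]
  congr 1
  funext k
  exact cos_mul_trigSum hJ (fun j hj => hX j hj k) θ

theorem eq_of_trigSum₂_eq {Y : ℤ → ℤ → ℂ}
    (h : ∀ lam θ, trigSum₂ J K X lam θ = trigSum₂ J K Y lam θ) :
    ∀ j ∈ J, ∀ k ∈ K, X j k = Y j k := fun j hj k hk =>
  eq_of_trigSum_eq (fun θ => eq_of_trigSum_eq
    (fun lam => by simpa only [trigSum₂_eq_trigSum] using h lam θ) k hk) j hj

end trigSum₂

section coefficients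

variable {X : ℤ → ℤ → ℂ} {a b : ℤ}

theorem Dth_apply_eq_zero {s : Finset ℤ} (hX : ∀ j ∉ s, ∀ k, X j k = 0) :
    ∀ j ∉ s, ∀ k, Dth X j k = 0 := fun j hj k => by
  simp [Dth, hX j hj k]

theorem MsinOp_apply_eq_zero (hX : ∀ j ∉ Icc a b, ∀ k, X j k = 0) :
    ∀ j ∉ Icc (a - 1) (b + 1), ∀ k, MsinOp X j k = 0 := fun j hj k => by
  simp only [mem_Icc] at hX hj
  simp [MsinOp, hX (j + 1) (by omega), hX (j - 1) (by omega)]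

theorem sylvesterOp_apply_eq_zero {j k : ℤ} (hX : ∀ i ∈ Icc (j - 2) (j + 2), X i k = 0) :
    sylvesterOp X j k = 0 := by
  simp only [mem_Icc] at hX
  simp (disch := omega) [sylvesterOp, MsinOp, McosOp, Dth, hX]

end coefficients

theorem doubledPoissonOp_trigSum₂ {S K : Finset ℤ} {X : ℤ → ℤ → ℂ} {a b : ℤ}
    (hX : ∀ j ∉ Icc a b, ∀ k, X j k = 0) (hS : Icc (a - 2) (b + 2) ⊆ S) (lam θ : ℝ) :
    doubledPoissonOp (trigSum₂ S K X) lam θ = trigSum₂ S K (sylvesterOp X) lam θ := by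
  have hS₁ : Icc (a - 1) (b + 1) ⊆ S := (Icc_subset_Icc (by omega) (by omega)).trans hS
  have hS₂ : Icc (a - 1 - 1) (b + 1 + 1) ⊆ S := (Icc_subset_Icc (by omega) (by omega)).trans hS
  have hDX := Dth_apply_eq_zero hX
  have hDDX := Dth_apply_eq_zero hDX
  simp only [doubledPoissonOp, deriv_trigSum₂_theta, deriv_trigSum₂_lam]
  rw [sq, mul_assoc, sin_mul_trigSum₂ hS₁ hDDX, sin_mul_trigSum₂ hS₂ (MsinOp_apply_eq_zero hDDX),
    mul_assoc, sin_mul_trigSum₂ hS₁ hDX, cos_mul_trigSum₂ hS₂ (MsinOp_apply_eq_zero hDX),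
    sylvesterOp, trigSum₂_add, trigSum₂_add]
  congr 2
  funext j k
  ring

theorem sylvesterOp_eq_of_doubledPoissonOp_eq {K : Finset ℤ} {X F : ℤ → ℤ → ℂ} {a b : ℤ}
    (hX : ∀ j k, j ∉ Icc a b ∨ k ∉ K → X j k = 0)
    (hF : ∀ j k, j ∉ Icc (a - 2) (b + 2) ∨ k ∉ K → F j k = 0)
    (h : ∀ lam θ, doubledPoissonOp (trigSum₂ (Icc a b) K X) lam θ =
      trigSum₂ (Icc (a - 2) (b + 2)) K F lam θ) :
    sylvesterOp X = F := by
  have hrow : ∀ j ∉ Icc a b, ∀ k, X j k = 0 := fun j hj k => hX j k (.inl hj)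
  have hcoef : ∀ lam θ, trigSum₂ (Icc (a - 2) (b + 2)) K (sylvesterOp X) lam θ =
      trigSum₂ (Icc (a - 2) (b + 2)) K F lam θ := fun lam θ => by
    rw [← doubledPoissonOp_trigSum₂ hrow subset_rfl, ← h,
      trigSum₂_of_subset (J' := Icc (a - 2) (b + 2)) (Icc_subset_Icc (by omega) (by omega)) hrow]
  funext j k
  by_cases hjk : j ∈ Icc (a - 2) (b + 2) ∧ k ∈ K
  · exact eq_of_trigSum₂_eq hcoef j hjk.1 k hjk.2
  rw [hF j k (not_and_or.1 hjk)]
  refine sylvesterOp_apply_eq_zero fun i hi => hX i k ?_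
  rcases not_and_or.1 hjk with hj | hk
  · simp only [mem_Icc] at hj hi ⊢
    exact .inl (by omega)
  · exact .inr hk

/-- If a 2D trigonometric polynomial `u(λ,θ) = Σ_j Σ_k X_{jk} e^{ijθ}e^{ikλ}` solves
the doubled Poisson equation `sin²θ·u_θθ + cos θ sin θ·u_θ + u_λλ = sin²θ·f̃`, whose
right-hand side has Fourier coefficients `F`, then `X` satisfies the Sylvester
equation `(M_sin² D_m² + M_cos M_sin D_m) X + X D_n² = F` entrywise. -/
theorem poisson_sylvester_equation (m n : ℕ) (X F : ℤ → ℤ → ℂ)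
    (ft u : ℝ → ℝ → ℂ)
    (hu : ∀ lam θ : ℝ, u lam θ =
      ∑ j ∈ Finset.Icc (-(m : ℤ) / 2) ((m : ℤ) / 2 - 1),
        ∑ k ∈ Finset.Icc (-(n : ℤ) / 2) ((n : ℤ) / 2 - 1),
          X j k * Complex.exp (Complex.I * j * θ) * Complex.exp (Complex.I * k * lam))
    (hXsupp : ∀ j k : ℤ,
      j ∉ Finset.Icc (-(m : ℤ) / 2) ((m : ℤ) / 2 - 1) ∨
        k ∉ Finset.Icc (-(n : ℤ) / 2) ((n : ℤ) / 2 - 1) → X j k = 0)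
    (hF : ∀ lam θ : ℝ, ((Real.sin θ : ℂ)) ^ 2 * ft lam θ =
      ∑ j ∈ Finset.Icc (-(m : ℤ) / 2 - 2) ((m : ℤ) / 2 + 1),
        ∑ k ∈ Finset.Icc (-(n : ℤ) / 2) ((n : ℤ) / 2 - 1),
          F j k * Complex.exp (Complex.I * j * θ) * Complex.exp (Complex.I * k * lam))
    (hFsupp : ∀ j k : ℤ,
      j ∉ Finset.Icc (-(m : ℤ) / 2 - 2) ((m : ℤ) / 2 + 1) ∨
        k ∉ Finset.Icc (-(n : ℤ) / 2) ((n : ℤ) / 2 - 1) → F j k = 0)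
    (hpde : ∀ lam θ : ℝ,
      ((Real.sin θ : ℂ)) ^ 2 * deriv (fun t => deriv (fun t' => u lam t') t) θ +
          (Real.cos θ : ℂ) * (Real.sin θ : ℂ) * deriv (fun t => u lam t) θ +
          deriv (fun l => deriv (fun l' => u l' θ) l) lam =
        ((Real.sin θ : ℂ)) ^ 2 * ft lam θ) :
    ∀ j k : ℤ,
      MsinOp (MsinOp (Dth (Dth X))) j k + McosOp (MsinOp (Dth X)) j k +
          (Complex.I * k) ^ 2 * X j k =
        F j k := by
  have hu' : u = trigSum₂ _ _ X := funext₂ hu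
  subst hu'
  rw [show (m : ℤ) / 2 + 1 = (m : ℤ) / 2 - 1 + 2 by ring] at hF hFsupp
  exact congrFun₂ (sylvesterOp_eq_of_doubledPoissonOp_eq hXsupp hFsupp
    fun lam θ => (hpde lam θ).trans (hF lam θ))
end
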